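/- arXiv:1805.03412 — 2 statements merged into one kernel-verified Lean document; each statement's English description precedes it below -/
import Mathlib

section
/- Let T_n be a strongly connected tournament of order n and irregularity i(T_n). Then for each vertex v of T_n, the number of directed triangles containing v is at least δ(v)·(n − δ(v) − i(T_n))/2. -/
open Finset

/-- A tournament on vertex type `V`: between every two distinct vertices there is
exactly one arc, and there are no loops. -/
structure Tournament (V : Type) where
  arc : V → V → Bool
  irrefl : ∀ v, arc v v = false
  oneArc : ∀ u v : V, u ≠ v → arc u v = !arc v u

namespace Tournament

variable {V : Type} [Fintype V]

/-- Outdegree `d⁺(v)`. -/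
def outDeg (T : Tournament V) (v : V) : ℕ :=
  (univ.filter fun w => T.arc v w).card

/-- Indegree `d⁻(v)`. -/
def inDeg (T : Tournament V) (v : V) : ℕ :=
  (univ.filter fun u => T.arc u v).card

/-- `δ(v) = min{d⁺(v), d⁻(v)}`. -/
def minDeg (T : Tournament V) (v : V) : ℕ :=
  min (T.outDeg v) (T.inDeg v)

/-- The irregularity `i(T)`: the maximum of `|d⁺(v) − d⁻(v)|` over all vertices. -/
def irreg (T : Tournament V) : ℕ :=
  univ.sup fun v => ((T.outDeg v : ℤ) - (T.inDeg v : ℤ)).natAbs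

/-- Strong connectivity: every vertex can reach every other vertex by a directed path. -/
def StronglyConnected (T : Tournament V) : Prop :=
  ∀ u v : V, Relation.ReflTransGen (fun a b => T.arc a b) u v

/-- The number of in-arcs of `v` with color `c`. -/
def monoInDeg (T : Tournament V) (C : V → V → ℕ) (v : V) (c : ℕ) : ℕ :=
  (univ.filter fun u => T.arc u v ∧ C u v = c).card

/-- The number of out-arcs of `v` with color `c`. -/
def monoOutDeg (T : Tournament V) (C : V → V → ℕ) (v : V) (c : ℕ) : ℕ :=
  (univ.filter fun w => T.arc v w ∧ C v w = c).card

/-- The maximum monochromatic indegree `Δ^{-mon}(T)`. -/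
def maxMonoIn (T : Tournament V) (C : V → V → ℕ) : ℕ :=
  univ.sup fun v => (univ.image fun u => C u v).sup (T.monoInDeg C v)

/-- The maximum monochromatic outdegree `Δ^{+mon}(T)`. -/
def maxMonoOut (T : Tournament V) (C : V → V → ℕ) : ℕ :=
  univ.sup fun v => (univ.image fun w => C v w).sup (T.monoOutDeg C v)

/-- The directed triangles through `v`, encoded as ordered pairs `(w, u)` with
arcs `v → w → u → v`.  This gives each triangle through `v` exactly once. -/
def trianglesThrough (T : Tournament V) (v : V) : Finset (V × V) :=
  univ.filter fun p => T.arc v p.1 ∧ T.arc p.1 p.2 ∧ T.arc p.2 v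

/-- The rainbow triangles through `v`: all three arcs have pairwise distinct colors. -/
def rainbowTrianglesThrough (T : Tournament V) (C : V → V → ℕ) (v : V) : Finset (V × V) :=
  (T.trianglesThrough v).filter fun p =>
    C v p.1 ≠ C p.1 p.2 ∧ C p.1 p.2 ≠ C p.2 v ∧ C p.2 v ≠ C v p.1

/-- The non-rainbow triangles through `v`: some two arcs share a color. -/
def nonRainbowTrianglesThrough (T : Tournament V) (C : V → V → ℕ) (v : V) : Finset (V × V) :=
  (T.trianglesThrough v).filter fun p =>
    ¬(C v p.1 ≠ C p.1 p.2 ∧ C p.1 p.2 ≠ C p.2 v ∧ C p.2 v ≠ C v p.1)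

/-- Ordered triples `(x, y, z)` with arcs `x → y → z → x`.  Each directed triangle
is counted exactly three times (once per cyclic rotation). -/
def triangleTriples (T : Tournament V) : Finset (V × V × V) :=
  univ.filter fun p => T.arc p.1 p.2.1 ∧ T.arc p.2.1 p.2.2 ∧ T.arc p.2.2 p.1

/-- Ordered triples representing rainbow triangles (each rainbow triangle thrice). -/
def rainbowTriples (T : Tournament V) (C : V → V → ℕ) : Finset (V × V × V) :=
  T.triangleTriples.filter fun p =>
    C p.1 p.2.1 ≠ C p.2.1 p.2.2 ∧ C p.2.1 p.2.2 ≠ C p.2.2 p.1 ∧ C p.2.2 p.1 ≠ C p.1 p.2.1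

/-- Ordered triples representing non-rainbow triangles (each such triangle thrice). -/
def nonRainbowTriples (T : Tournament V) (C : V → V → ℕ) : Finset (V × V × V) :=
  T.triangleTriples.filter fun p =>
    ¬(C p.1 p.2.1 ≠ C p.2.1 p.2.2 ∧ C p.2.1 p.2.2 ≠ C p.2.2 p.1 ∧ C p.2.2 p.1 ≠ C p.1 p.2.1)

end Tournament

/-!
Let `O = N⁺(v)` and `I = N⁻(v)`. The triangles through `v` are exactly the arcs from `O` to `I`,
so summing the outdegrees of the vertices of `O` counts the `|O|(|O| - 1)/2` arcs inside `O` plus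
the triangles through `v`. Every outdegree is at least `(n - 1 - i(T))/2`, which gives
`2 t(v) ≥ |O|(n - i(T) - |O|)`. Reversing all arcs gives the same bound with `|I|` in place of `|O|`.
-/

namespace Tournament

variable {V : Type} (T : Tournament V)

lemma arc_ite_add_arc_ite_add_ite_eq (w u : V) [Decidable (u = w)] :
    ((if T.arc w u then 1 else 0) + (if T.arc u w then 1 else 0) + if u = w then 1 else 0) = 1 := by
  by_cases h : u = w
  · simp [h, T.irrefl]
  · cases hb : T.arc u w <;> simp [T.oneArc w u (Ne.symm h), hb, h]

lemma card_filter_arc_add_card_filter_arc_add_one {S : Finset V} {w : V} (hw : w ∈ S) :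
    #{u ∈ S | T.arc w u} + #{u ∈ S | T.arc u w} + 1 = #S := by
  classical
  have h := sum_congr rfl fun u (_ : u ∈ S) => T.arc_ite_add_arc_ite_add_ite_eq w u
  rwa [sum_add_distrib, sum_add_distrib, sum_ite_eq' S w, if_pos hw, ← card_filter,
    ← card_filter, sum_const, smul_eq_mul, mul_one] at h

/-- Any `k` vertices span `k(k-1)/2` arcs. -/
lemma two_mul_sum_card_filter_arc_add_card (S : Finset V) :
    2 * ∑ w ∈ S, #{u ∈ S | T.arc w u} + #S = #S * #S := by
  have hswap : ∑ w ∈ S, #{u ∈ S | T.arc u w} = ∑ w ∈ S, #{u ∈ S | T.arc w u} := by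
    simp only [card_filter]
    exact sum_comm
  have h := sum_congr rfl fun w (hw : w ∈ S) => T.card_filter_arc_add_card_filter_arc_add_one hw
  rw [sum_add_distrib, sum_add_distrib, hswap, sum_const, sum_const, smul_eq_mul,
    smul_eq_mul, mul_one] at h
  omega

lemma arc_eq_false_of_arc {v w : V} (h : T.arc v w) : T.arc w v = false := by
  by_cases hvw : v = w
  · subst hvw; exact T.irrefl v
  · simpa [h] using T.oneArc w v (Ne.symm hvw)

def reverse : Tournament V where
  arc u w := T.arc w u
  irrefl v := T.irrefl v
  oneArc u w h := T.oneArc w u h.symm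

variable [Fintype V]

def outNbrs (v : V) : Finset V := {w | T.arc v w}

def inNbrs (v : V) : Finset V := {u | T.arc u v}

lemma outDeg_add_inDeg_add_one (w : V) : T.outDeg w + T.inDeg w + 1 = Fintype.card V :=
  T.card_filter_arc_add_card_filter_arc_add_one (mem_univ w)

lemma card_sub_one_sub_irreg_le_two_mul_outDeg (w : V) :
    (Fintype.card V : ℚ) - 1 - T.irreg ≤ 2 * T.outDeg w := by
  have hsum := T.outDeg_add_inDeg_add_one w
  have hdiff : ((T.outDeg w : ℤ) - T.inDeg w).natAbs ≤ T.irreg :=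
    le_sup (f := fun u => ((T.outDeg u : ℤ) - T.inDeg u).natAbs) (mem_univ w)
  have : (Fintype.card V : ℤ) - 1 - T.irreg ≤ 2 * T.outDeg w := by omega
  exact_mod_cast this

lemma outDeg_eq_card_filter_outNbrs_add_card_filter_inNbrs {v w : V} (hwv : T.arc w v = false) :
    T.outDeg w = #{u ∈ T.outNbrs v | T.arc w u} + #{u ∈ T.inNbrs v | T.arc w u} := by
  classical
  have hdisj : Disjoint {u ∈ T.outNbrs v | T.arc w u} {u ∈ T.inNbrs v | T.arc w u} := by
    simp only [outNbrs, inNbrs, filter_filter]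
    exact disjoint_filter.mpr fun u _ h h' => by simp [T.arc_eq_false_of_arc h.1] at h'
  rw [← card_union_of_disjoint hdisj, outDeg]
  congr 1
  ext u
  by_cases huv : u = v
  · simp [outNbrs, inNbrs, huv, hwv]
  · cases hb : T.arc u v <;> simp [outNbrs, inNbrs, T.oneArc v u (Ne.symm huv), hb]

lemma card_trianglesThrough (v : V) :
    #(T.trianglesThrough v) = ∑ w ∈ T.outNbrs v, #{u ∈ T.inNbrs v | T.arc w u} := by
  have h : T.trianglesThrough v = {p ∈ T.outNbrs v ×ˢ T.inNbrs v | T.arc p.1 p.2} := by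
    ext p
    simp only [trianglesThrough, outNbrs, inNbrs, mem_filter, mem_univ, mem_product, true_and]
    tauto
  simp only [h, card_filter, sum_product]

lemma outDeg_mul_le_two_mul_card_trianglesThrough (v : V) :
    (T.outDeg v : ℚ) * (Fintype.card V - T.irreg - T.outDeg v) ≤ 2 * #(T.trianglesThrough v) := by
  set O := T.outNbrs v
  have hO : #O = T.outDeg v := rfl
  have hsum : ∑ w ∈ O, T.outDeg w = ∑ w ∈ O, #{u ∈ O | T.arc w u} + #(T.trianglesThrough v) := by
    rw [card_trianglesThrough, ← sum_add_distrib]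
    refine sum_congr rfl fun w hw => T.outDeg_eq_card_filter_outNbrs_add_card_filter_inNbrs ?_
    exact T.arc_eq_false_of_arc (mem_filter.mp hw).2
  have harcs := T.two_mul_sum_card_filter_arc_add_card O
  have hlow : #O • ((Fintype.card V : ℚ) - 1 - T.irreg) ≤ ∑ w ∈ O, (2 * T.outDeg w : ℚ) :=
    card_nsmul_le_sum _ _ _ fun w _ => T.card_sub_one_sub_irreg_le_two_mul_outDeg w
  rw [nsmul_eq_mul, ← mul_sum] at hlow
  rw [← hO]
  have hsumQ : (∑ w ∈ O, T.outDeg w : ℚ)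
      = ∑ w ∈ O, (#{u ∈ O | T.arc w u} : ℚ) + #(T.trianglesThrough v) := by exact_mod_cast hsum
  have harcsQ : 2 * ∑ w ∈ O, (#{u ∈ O | T.arc w u} : ℚ) + #O = #O * #O := by exact_mod_cast harcs
  linarith

@[simp] lemma reverse_outDeg (w : V) : T.reverse.outDeg w = T.inDeg w := rfl

@[simp] lemma reverse_inDeg (w : V) : T.reverse.inDeg w = T.outDeg w := rfl

@[simp] lemma reverse_irreg : T.reverse.irreg = T.irreg := by
  refine sup_congr rfl fun w _ => ?_
  simp only [reverse_outDeg, reverse_inDeg]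
  omega

@[simp] lemma card_trianglesThrough_reverse (v : V) :
    #(T.reverse.trianglesThrough v) = #(T.trianglesThrough v) := by
  refine card_bij (fun p _ => p.swap) ?_ (fun p _ q _ h => Prod.swap_injective h) ?_
  · intro p hp
    simp only [trianglesThrough, mem_filter, mem_univ, true_and] at hp ⊢
    exact ⟨hp.2.2, hp.2.1, hp.1⟩
  · intro q hq
    simp only [trianglesThrough, mem_filter, mem_univ, true_and] at hq
    exact ⟨q.swap, by simpa [trianglesThrough] using ⟨hq.2.2, hq.2.1, hq.1⟩, q.swap_swap⟩

lemma inDeg_mul_le_two_mul_card_trianglesThrough (v : V) :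
    (T.inDeg v : ℚ) * (Fintype.card V - T.irreg - T.inDeg v) ≤ 2 * #(T.trianglesThrough v) := by
  simpa using T.reverse.outDeg_mul_le_two_mul_card_trianglesThrough v

end Tournament

theorem triangles_through_vertex_lower_bound_general
    {V : Type} [Fintype V] (n : ℕ) (hn : Fintype.card V = n)
    (T : Tournament V)
    (v : V) :
    ((T.trianglesThrough v).card : ℚ) ≥
      (T.minDeg v : ℚ) * ((n : ℚ) - (T.minDeg v : ℚ) - (T.irreg : ℚ)) / 2 := by
  subst hn
  have hmin : (T.minDeg v : ℚ) * (Fintype.card V - T.irreg - T.minDeg v)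
      ≤ 2 * #(T.trianglesThrough v) := by
    rcases le_total (T.outDeg v) (T.inDeg v) with h | h
    · rw [Tournament.minDeg, min_eq_left h]
      exact T.outDeg_mul_le_two_mul_card_trianglesThrough v
    · rw [Tournament.minDeg, min_eq_right h]
      exact T.inDeg_mul_le_two_mul_card_trianglesThrough v
  linarith

/-- Lemma 1: In a strongly connected tournament of order `n`, every
vertex `v` lies on at least `δ(v)(n − δ(v) − i(T))/2` directed triangles. -/
theorem triangles_through_vertex_lower_bound
    {V : Type} [Fintype V] (n : ℕ) (hn : Fintype.card V = n)
    (T : Tournament V)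
    (hsc : T.StronglyConnected)
    (v : V) :
    ((T.trianglesThrough v).card : ℚ) ≥
      (T.minDeg v : ℚ) * ((n : ℚ) - (T.minDeg v : ℚ) - (T.irreg : ℚ)) / 2 :=
  triangles_through_vertex_lower_bound_general n hn T v
end

section
/- Let T_n be a strongly connected arc-colored tournament of order n. Then for each vertex v of T_n, the number of non-rainbow triangles containing v is at most Δ^{-mon}(T_n)·(n−1) + Δ^{+mon}(T_n)·d^+(v). -/
open Finset

/-!
Write a triangle through `v` as `v → w → u → v`. If it is not rainbow, two of its arcs share a
colour. If `uv` and `vw` do, then `u` is an in-neighbour of `v` of the colour of `vw`: at most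
`Δ⁻` choices for each of the `d⁺(v)` out-neighbours `w`. If `vw` and `wu` do, `u` is an
out-neighbour of `w` of the colour of `vw`: at most `Δ⁺` choices per `w`. If `wu` and `uv` do,
`w` is an in-neighbour of `u` of the colour of `uv`: at most `Δ⁻` choices for each of the `d⁻(v)`
in-neighbours `u`. Since `d⁺(v) + d⁻(v) = n - 1`, the three counts add up to the bound.
-/

theorem Finset.card_le_mul_card_of_injOn_fiberwise {γ α β : Type*} {s : Finset γ} {A : Finset α}
    {B : α → Finset β} {k : ℕ} (f : γ → α) (g : γ → β) (hf : ∀ x ∈ s, f x ∈ A)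
    (hg : ∀ x ∈ s, g x ∈ B (f x)) (hinj : Set.InjOn (fun x => (f x, g x)) s)
    (hB : ∀ a ∈ A, (B a).card ≤ k) :
    s.card ≤ k * A.card := by
  have hsigma : s.card ≤ (A.sigma B).card := by
    refine card_le_card_of_injOn (fun x => ⟨f x, g x⟩)
      (fun x hx => mem_sigma.2 ⟨hf x hx, hg x hx⟩) fun x hx y hy hxy => hinj hx hy ?_
    simp only [Sigma.mk.inj_iff, heq_iff_eq] at hxy
    exact Prod.ext hxy.1 hxy.2
  calc s.card ≤ ∑ a ∈ A, (B a).card := hsigma.trans_eq (card_sigma A B)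
    _ ≤ A.card • k := sum_le_card_nsmul A _ k hB
    _ = k * A.card := by rw [smul_eq_mul, mul_comm]

namespace Tournament

variable {V : Type} [Fintype V] (T : Tournament V) (C : V → V → ℕ)

theorem monoInDeg_le_maxMonoIn (x : V) (c : ℕ) : T.monoInDeg C x c ≤ T.maxMonoIn C := by
  obtain h | ⟨u, hu⟩ := (univ.filter fun u => T.arc u x ∧ C u x = c).eq_empty_or_nonempty
  · simp [monoInDeg, h]
  · obtain ⟨-, rfl⟩ : T.arc u x ∧ C u x = c := by simpa using hu
    exact le_sup_of_le (mem_univ x) (le_sup (mem_image_of_mem _ (mem_univ u)))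

theorem monoOutDeg_le_maxMonoOut (x : V) (c : ℕ) : T.monoOutDeg C x c ≤ T.maxMonoOut C := by
  obtain h | ⟨w, hw⟩ := (univ.filter fun w => T.arc x w ∧ C x w = c).eq_empty_or_nonempty
  · simp [monoOutDeg, h]
  · obtain ⟨-, rfl⟩ : T.arc x w ∧ C x w = c := by simpa using hw
    exact le_sup_of_le (mem_univ x) (le_sup (mem_image_of_mem _ (mem_univ w)))

theorem outDeg_add_inDeg (v : V) : T.outDeg v + T.inDeg v = Fintype.card V - 1 := by
  classical
  have hout : T.outDeg v = ((univ.erase v).filter fun w => T.arc v w).card := by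
    rw [outDeg, filter_erase, erase_eq_of_notMem (by simp [T.irrefl])]
  have hin : T.inDeg v = ((univ.erase v).filter fun u => ¬T.arc v u).card := by
    refine congr_arg card (ext fun u => ?_)
    by_cases huv : u = v
    · simp [huv, T.irrefl]
    · simp [huv, T.oneArc u v huv]
  rw [hout, hin, card_filter_add_card_filter_not, card_erase_of_mem (mem_univ v), card_univ]

variable (v : V)

theorem card_filter_inColor_eq_outColor_le :
    ((T.trianglesThrough v).filter fun p => C p.2 v = C v p.1).card ≤
      T.maxMonoIn C * T.outDeg v := by
  refine card_le_mul_card_of_injOn_fiberwise (B := fun w => univ.filter fun u =>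
    T.arc u v ∧ C u v = C v w) Prod.fst Prod.snd ?_ ?_ (fun p _ q _ h => h) fun w _ =>
    T.monoInDeg_le_maxMonoIn C v (C v w)
  all_goals intro p hp; simp only [trianglesThrough, mem_filter, mem_univ, true_and] at hp ⊢
  exacts [hp.1.1, ⟨hp.1.2.2, hp.2⟩]

theorem card_filter_outColor_eq_midColor_le :
    ((T.trianglesThrough v).filter fun p => C v p.1 = C p.1 p.2).card ≤
      T.maxMonoOut C * T.outDeg v := by
  refine card_le_mul_card_of_injOn_fiberwise (B := fun w => univ.filter fun u =>
    T.arc w u ∧ C w u = C v w) Prod.fst Prod.snd ?_ ?_ (fun p _ q _ h => h) fun w _ =>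
    T.monoOutDeg_le_maxMonoOut C w (C v w)
  all_goals intro p hp; simp only [trianglesThrough, mem_filter, mem_univ, true_and] at hp ⊢
  exacts [hp.1.1, ⟨hp.1.2.1, hp.2.symm⟩]

theorem card_filter_midColor_eq_inColor_le :
    ((T.trianglesThrough v).filter fun p => C p.1 p.2 = C p.2 v).card ≤
      T.maxMonoIn C * T.inDeg v := by
  refine card_le_mul_card_of_injOn_fiberwise (B := fun u => univ.filter fun w =>
    T.arc w u ∧ C w u = C u v) Prod.snd Prod.fst ?_ ?_
    (fun p _ q _ h => Prod.ext (congr_arg Prod.snd h) (congr_arg Prod.fst h)) fun u _ =>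
    T.monoInDeg_le_maxMonoIn C u (C u v)
  all_goals intro p hp; simp only [trianglesThrough, mem_filter, mem_univ, true_and] at hp ⊢
  exacts [hp.1.2.2, ⟨hp.1.2.1, hp.2⟩]

theorem nonRainbowTrianglesThrough_subset [DecidableEq V] :
    T.nonRainbowTrianglesThrough C v ⊆
      (T.trianglesThrough v).filter (fun p => C p.2 v = C v p.1) ∪
        (T.trianglesThrough v).filter (fun p => C v p.1 = C p.1 p.2) ∪
          (T.trianglesThrough v).filter (fun p => C p.1 p.2 = C p.2 v) := by
  intro p hp
  simp only [nonRainbowTrianglesThrough, mem_filter, mem_union] at hp ⊢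
  tauto

end Tournament

theorem nonrainbow_triangles_through_vertex_upper_bound_general
    {V : Type} [Fintype V] (n : ℕ) (hn : Fintype.card V = n)
    (T : Tournament V) (C : V → V → ℕ)
    (v : V) :
    (T.nonRainbowTrianglesThrough C v).card ≤
      T.maxMonoIn C * (n - 1) + T.maxMonoOut C * T.outDeg v := by
  classical
  calc (T.nonRainbowTrianglesThrough C v).card
      ≤ T.maxMonoIn C * T.outDeg v + T.maxMonoOut C * T.outDeg v + T.maxMonoIn C * T.inDeg v :=
        (card_le_card (T.nonRainbowTrianglesThrough_subset C v)).trans <|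
          (card_union_le _ _).trans <| add_le_add ((card_union_le _ _).trans <|
            add_le_add (T.card_filter_inColor_eq_outColor_le C v)
              (T.card_filter_outColor_eq_midColor_le C v))
            (T.card_filter_midColor_eq_inColor_le C v)
    _ = T.maxMonoIn C * (T.outDeg v + T.inDeg v) + T.maxMonoOut C * T.outDeg v := by ring
    _ = T.maxMonoIn C * (n - 1) + T.maxMonoOut C * T.outDeg v := by
        rw [T.outDeg_add_inDeg, hn]

/-- Lemma 2: In a strongly connected arc-colored tournament of order `n`,
every vertex `v` lies on at most `Δ^{-mon}(n−1) + Δ^{+mon} d⁺(v)` non-rainbow triangles. -/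
theorem nonrainbow_triangles_through_vertex_upper_bound
    {V : Type} [Fintype V] (n : ℕ) (hn : Fintype.card V = n)
    (T : Tournament V) (C : V → V → ℕ)
    (hsc : T.StronglyConnected)
    (v : V) :
    (T.nonRainbowTrianglesThrough C v).card ≤
      T.maxMonoIn C * (n - 1) + T.maxMonoOut C * T.outDeg v :=
  nonrainbow_triangles_through_vertex_upper_bound_general n hn T C v
end
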